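/- For a binary linear code C of length n and any i with 0 ≤ i ≤ n/2, the number of zero neighbors of weight 2i in the even weight subcode C_even equals L_{2i}(C) + N_{2i}(C). -/

import Mathlib

open Finset

/-- Support of a binary vector: the set of nonzero coordinates. -/
def supp {n : ℕ} (v : Fin n → ZMod 2) : Finset (Fin n) :=
  Finset.univ.filter fun i => v i ≠ 0

/-- Hamming weight. -/
def wt {n : ℕ} (v : Fin n → ZMod 2) : ℕ := (supp v).card

/-- A nonzero codeword of `D` is a zero neighbor (minimal codeword) if no nonzero
codeword of `D` has support strictly contained in its support. -/
def IsZeroNeighbor {n : ℕ} (D : Set (Fin n → ZMod 2)) (v : Fin n → ZMod 2) : Prop :=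
  v ∈ D ∧ v ≠ 0 ∧ ∀ v' ∈ D, v' ≠ 0 → ¬ supp v' ⊂ supp v

/-- `v` is decomposable in `D` if it is the sum of two nonzero codewords of `D`
with disjoint supports. -/
def Decomposable {n : ℕ} (D : Set (Fin n → ZMod 2)) (v : Fin n → ZMod 2) : Prop :=
  ∃ v1 v2, v1 ∈ D ∧ v2 ∈ D ∧ v1 ≠ 0 ∧ v2 ≠ 0 ∧
    Disjoint (supp v1) (supp v2) ∧ v = v1 + v2

/-- Extension of a vector by its overall parity bit. -/
def extVec {n : ℕ} (v : Fin n → ZMod 2) : Fin (n + 1) → ZMod 2 :=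
  Fin.snoc v (∑ i, v i)

/-- The extended code. -/
def extCode {n : ℕ} (C : Submodule (ZMod 2) (Fin n → ZMod 2)) :
    Set (Fin (n + 1) → ZMod 2) :=
  extVec '' (C : Set (Fin n → ZMod 2))

/-- An even-weight codeword is only-odd-decomposable if it is decomposable and in every
decomposition into nonzero disjoint-support codewords both parts have odd weight. -/
def OnlyOddDecomposable {n : ℕ} (C : Submodule (ZMod 2) (Fin n → ZMod 2))
    (v : Fin n → ZMod 2) : Prop :=
  Even (wt v) ∧ Decomposable (C : Set (Fin n → ZMod 2)) v ∧
    ∀ v1 v2, v1 ∈ C → v2 ∈ C → v1 ≠ 0 → v2 ≠ 0 →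
      Disjoint (supp v1) (supp v2) → v = v1 + v2 → Odd (wt v1) ∧ Odd (wt v2)

/-- `L_w(D)`: the number of zero neighbors of weight `w` in `D`. -/
noncomputable def Lw {n : ℕ} (D : Set (Fin n → ZMod 2)) (w : ℕ) : ℕ :=
  {v : Fin n → ZMod 2 | IsZeroNeighbor D v ∧ wt v = w}.ncard

/-- `N_w(C)`: the number of only-odd-decomposable codewords of weight `w` in `C`. -/
noncomputable def Nw {n : ℕ} (C : Submodule (ZMod 2) (Fin n → ZMod 2)) (w : ℕ) : ℕ :=
  {v : Fin n → ZMod 2 | v ∈ C ∧ OnlyOddDecomposable C v ∧ wt v = w}.ncard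

/-- Action of a coordinate permutation on a vector. -/
def permVec {n : ℕ} (π : Equiv.Perm (Fin n)) (v : Fin n → ZMod 2) : Fin n → ZMod 2 :=
  v ∘ π.symm

/-- `π` is an automorphism of the code `D`. -/
def IsAut {n : ℕ} (D : Set (Fin n → ZMod 2)) (π : Equiv.Perm (Fin n)) : Prop :=
  permVec π '' D = D

/-- The even weight subcode of `C`, as a set. -/
def evenSub {n : ℕ} (C : Submodule (ZMod 2) (Fin n → ZMod 2)) :
    Set (Fin n → ZMod 2) :=
  {v : Fin n → ZMod 2 | v ∈ C ∧ Even (wt v)}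

/-!
A codeword `v` of `C` that is a zero neighbor of `C_even` but not of `C` has a nonzero
codeword `v'` with `supp v' ⊂ supp v`; then `v = v' + (v + v')` is a decomposition. Conversely,
the parts of any decomposition have supports strictly inside `supp v`, so minimality of `v`
in `C_even` forces both to be odd, and this is exactly only-odd-decomposability. Zero neighbors
of `C` are never decomposable, so the two kinds of codewords are disjoint.
-/

section BinaryCode

variable {n : ℕ}

lemma mem_supp {v : Fin n → ZMod 2} {j : Fin n} : j ∈ supp v ↔ v j ≠ 0 := by
  simp [supp]

lemma supp_nonempty_iff {v : Fin n → ZMod 2} : (supp v).Nonempty ↔ v ≠ 0 := by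
  refine ⟨fun ⟨j, hj⟩ hv => mem_supp.mp hj (by simp [hv]), fun hv => ?_⟩
  obtain ⟨j, hj⟩ := Function.ne_iff.mp hv
  exact ⟨j, mem_supp.mpr hj⟩

lemma supp_add_of_disjoint {v₁ v₂ : Fin n → ZMod 2} (h : Disjoint (supp v₁) (supp v₂)) :
    supp (v₁ + v₂) = supp v₁ ∪ supp v₂ := by
  ext j
  have hj : ¬ (v₁ j ≠ 0 ∧ v₂ j ≠ 0) := fun ⟨h₁, h₂⟩ =>
    Finset.disjoint_left.mp h (mem_supp.mpr h₁) (mem_supp.mpr h₂)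
  simp only [mem_supp, Finset.mem_union, Pi.add_apply]
  revert hj
  generalize v₁ j = a; generalize v₂ j = b
  revert a b; decide

lemma supp_add_of_subset {v v' : Fin n → ZMod 2} (h : supp v' ⊆ supp v) :
    supp (v + v') = supp v \ supp v' := by
  ext j
  have hj : v' j ≠ 0 → v j ≠ 0 := fun h' => mem_supp.mp (h (mem_supp.mpr h'))
  simp only [mem_supp, Finset.mem_sdiff, Pi.add_apply]
  revert hj
  generalize v j = a; generalize v' j = b
  revert a b; decide

lemma supp_ssubset_of_eq_add {v v₁ v₂ : Fin n → ZMod 2} (h₂ : v₂ ≠ 0)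
    (hd : Disjoint (supp v₁) (supp v₂)) (he : v = v₁ + v₂) : supp v₁ ⊂ supp v := by
  rw [he, supp_add_of_disjoint hd]
  refine Finset.ssubset_iff_subset_ne.mpr ⟨Finset.subset_union_left, fun hEq => ?_⟩
  obtain ⟨j, hj⟩ := supp_nonempty_iff.mpr h₂
  exact Finset.disjoint_left.mp hd (hEq ▸ Finset.mem_union_right _ hj) hj

lemma Decomposable.ne_zero {D : Set (Fin n → ZMod 2)} {v : Fin n → ZMod 2}
    (h : Decomposable D v) : v ≠ 0 := by
  obtain ⟨v₁, v₂, -, -, h₁, h₂, hd, he⟩ := h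
  exact supp_nonempty_iff.mp
    ((supp_nonempty_iff.mpr h₁).mono (supp_ssubset_of_eq_add h₂ hd he).subset)

lemma IsZeroNeighbor.not_decomposable {D : Set (Fin n → ZMod 2)} {v : Fin n → ZMod 2}
    (hv : IsZeroNeighbor D v) : ¬ Decomposable D v := by
  rintro ⟨v₁, v₂, h₁D, -, h₁, h₂, hd, he⟩
  exact hv.2.2 v₁ h₁D h₁ (supp_ssubset_of_eq_add h₂ hd he)

lemma IsZeroNeighbor.mono {D E : Set (Fin n → ZMod 2)} {v : Fin n → ZMod 2}
    (hDE : D ⊆ E) (hvD : v ∈ D) (hv : IsZeroNeighbor E v) : IsZeroNeighbor D v :=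
  ⟨hvD, hv.2.1, fun v' hv' => hv.2.2 v' (hDE hv')⟩

variable {C : Submodule (ZMod 2) (Fin n → ZMod 2)}

lemma eq_add_of_supp_ssubset {v v' : Fin n → ZMod 2} (hv : v ∈ C) (hv' : v' ∈ C)
    (hss : supp v' ⊂ supp v) :
    v + v' ∈ C ∧ v + v' ≠ 0 ∧ Disjoint (supp v') (supp (v + v')) ∧ v = v' + (v + v') := by
  have hsupp : supp (v + v') = supp v \ supp v' := supp_add_of_subset hss.subset
  refine ⟨C.add_mem hv hv', ?_, hsupp ▸ Finset.disjoint_sdiff, ?_⟩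
  · rw [← supp_nonempty_iff, hsupp]
    exact Finset.sdiff_nonempty.mpr hss.not_subset
  · rw [add_left_comm, ZModModule.add_self, add_zero]

lemma decomposable_of_supp_ssubset {v v' : Fin n → ZMod 2} (hv : v ∈ C) (hv' : v' ∈ C)
    (hv'0 : v' ≠ 0) (hss : supp v' ⊂ supp v) : Decomposable C v :=
  let ⟨hmem, hne, hd, he⟩ := eq_add_of_supp_ssubset hv hv' hss
  ⟨v', v + v', hv', hmem, hv'0, hne, hd, he⟩

lemma evenSub_subset : evenSub C ⊆ C := fun _ hv => hv.1

lemma OnlyOddDecomposable.isZeroNeighbor_evenSub {v : Fin n → ZMod 2} (hvC : v ∈ C)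
    (hv : OnlyOddDecomposable C v) : IsZeroNeighbor (evenSub C) v := by
  obtain ⟨hvE, hdec, hodd⟩ := hv
  refine ⟨⟨hvC, hvE⟩, hdec.ne_zero, ?_⟩
  rintro v' ⟨hv'C, hv'E⟩ hv'0 hss
  obtain ⟨hmem, hne, hd, he⟩ := eq_add_of_supp_ssubset hvC hv'C hss
  exact Nat.not_odd_iff_even.mpr hv'E (hodd v' (v + v') hv'C hmem hv'0 hne hd he).1

lemma IsZeroNeighbor.onlyOddDecomposable_of_evenSub {v : Fin n → ZMod 2}
    (hv : IsZeroNeighbor (evenSub C) v) (hnC : ¬ IsZeroNeighbor C v) :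
    OnlyOddDecomposable C v := by
  obtain ⟨⟨hvC, hvE⟩, hv0, hmin⟩ := hv
  refine ⟨hvE, ?_, fun v₁ v₂ h₁C h₂C h₁ h₂ hd he => ?_⟩
  · simp only [IsZeroNeighbor, SetLike.mem_coe, not_and, not_forall, not_not] at hnC
    obtain ⟨v', hv'C, hv'0, hss⟩ := hnC hvC hv0
    exact decomposable_of_supp_ssubset hvC hv'C hv'0 hss
  · have hodd : ∀ u, u ∈ C → u ≠ 0 → supp u ⊂ supp v → Odd (wt u) := fun u huC hu hss =>
      Nat.not_even_iff_odd.mp fun huE => hmin u ⟨huC, huE⟩ hu hss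
    exact ⟨hodd v₁ h₁C h₁ (supp_ssubset_of_eq_add h₂ hd he),
      hodd v₂ h₂C h₂ (supp_ssubset_of_eq_add h₁ hd.symm (he.trans (add_comm _ _)))⟩

lemma isZeroNeighbor_evenSub_iff {v : Fin n → ZMod 2} (hv : Even (wt v)) :
    IsZeroNeighbor (evenSub C) v ↔
      IsZeroNeighbor (C : Set (Fin n → ZMod 2)) v ∨ (v ∈ C ∧ OnlyOddDecomposable C v) := by
  refine ⟨fun h => ?_, ?_⟩
  · by_cases hC : IsZeroNeighbor (C : Set (Fin n → ZMod 2)) v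
    · exact Or.inl hC
    · exact Or.inr ⟨h.1.1, h.onlyOddDecomposable_of_evenSub hC⟩
  · rintro (h | ⟨hvC, h⟩)
    · exact h.mono evenSub_subset ⟨h.1, hv⟩
    · exact h.isZeroNeighbor_evenSub hvC

lemma setOf_isZeroNeighbor_evenSub_eq_union {w : ℕ} (hw : Even w) :
    {v | IsZeroNeighbor (evenSub C) v ∧ wt v = w} =
      {v | IsZeroNeighbor (C : Set (Fin n → ZMod 2)) v ∧ wt v = w} ∪
        {v | v ∈ C ∧ OnlyOddDecomposable C v ∧ wt v = w} := by
  ext v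
  simp only [Set.mem_union, Set.mem_ofPred, ← and_assoc, ← or_and_right]
  exact and_congr_left fun hv => isZeroNeighbor_evenSub_iff (hv ▸ hw)

lemma disjoint_setOf_isZeroNeighbor_onlyOddDecomposable (w : ℕ) :
    Disjoint {v | IsZeroNeighbor (C : Set (Fin n → ZMod 2)) v ∧ wt v = w}
      {v | v ∈ C ∧ OnlyOddDecomposable C v ∧ wt v = w} :=
  Set.disjoint_left.mpr fun _ h h' => h.1.not_decomposable h'.2.1.2.1

end BinaryCode

theorem lwd_evenSub_eq_general {n : ℕ}
    (C : Submodule (ZMod 2) (Fin n → ZMod 2)) (i : ℕ) :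
    Lw (evenSub C) (2 * i) =
      Lw (C : Set (Fin n → ZMod 2)) (2 * i) + Nw C (2 * i) := by
  rw [Lw, Lw, Nw, setOf_isZeroNeighbor_evenSub_eq_union (even_two_mul i),
    Set.ncard_union_eq (disjoint_setOf_isZeroNeighbor_onlyOddDecomposable _)
      (Set.toFinite _) (Set.toFinite _)]

theorem lwd_evenSub_eq {n : ℕ}
    (C : Submodule (ZMod 2) (Fin n → ZMod 2)) (i : ℕ) (hi : i ≤ n / 2) :
    Lw (evenSub C) (2 * i) =
      Lw (C : Set (Fin n → ZMod 2)) (2 * i) + Nw C (2 * i) :=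
  lwd_evenSub_eq_general C i
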